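/- If T' is a strong tournament and pq(T') is obtained from T' by adding vertices p and q with arcs q→p, p→t and t→q for every vertex t of T', then pq(T') is strong and f(pq(T')) = 2·f(T') + 1, where f denotes the number of minimal feedback vertex sets. -/

import Mathlib

/-- A set `W` of vertices is acyclic if the digraph `r` restricted to `W`
has no directed cycle (the transitive closure restricted to `W` is irreflexive). -/
def AcyclicOn {V : Type*} (r : V → V → Prop) (W : Set V) : Prop :=
  ∀ v : V, ¬ Relation.TransGen (fun a b => a ∈ W ∧ b ∈ W ∧ r a b) v v

/-- A tournament: an irreflexive relation with exactly one arc between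
every pair of distinct vertices. -/
def IsTournament {V : Type*} (r : V → V → Prop) : Prop :=
  (∀ v : V, ¬ r v v) ∧ ∀ u v : V, u ≠ v → (r u v ↔ ¬ r v u)

/-- A feedback vertex set: its deletion leaves an acyclic digraph. -/
def IsFVS {V : Type*} (r : V → V → Prop) (F : Set V) : Prop :=
  AcyclicOn r Fᶜ

/-- A minimal feedback vertex set. -/
def IsMinimalFVS {V : Type*} (r : V → V → Prop) (F : Set V) : Prop :=
  IsFVS r F ∧ ∀ F' : Set V, F' ⊆ F → IsFVS r F' → F' = F

/-- A feedback vertex set of the subtournament induced on `S`. -/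
def IsFVSOn {V : Type*} (r : V → V → Prop) (S F : Set V) : Prop :=
  F ⊆ S ∧ AcyclicOn r (S \ F)

/-- A minimal feedback vertex set of the subtournament induced on `S`. -/
def IsMinimalFVSOn {V : Type*} (r : V → V → Prop) (S F : Set V) : Prop :=
  IsFVSOn r S F ∧ ∀ F' : Set V, F' ⊆ F → IsFVSOn r S F' → F' = F

/-- Strong (strongly connected): a directed path between any ordered pair. -/
def IsStrong {V : Type*} (r : V → V → Prop) : Prop :=
  ∀ u v : V, Relation.ReflTransGen r u v

/-- The subtournament induced on `S` is strong. -/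
def IsStrongOn {V : Type*} (r : V → V → Prop) (S : Set V) : Prop :=
  ∀ u ∈ S, ∀ v ∈ S, Relation.ReflTransGen (fun a b => a ∈ S ∧ b ∈ S ∧ r a b) u v

/-- The score (out-degree) of a vertex. -/
noncomputable def outScore {V : Type*} (r : V → V → Prop) (v : V) : ℕ :=
  {u : V | r v u}.ncard

/-- The number of minimal feedback vertex sets of a tournament. -/
noncomputable def fvsCount (V : Type*) (r : V → V → Prop) : ℕ :=
  {F : Set V | IsMinimalFVS r F}.ncard

/-- `maxMinFVS n` = maximum number of minimal FVSs over all `n`-vertex tournaments. -/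
noncomputable def maxMinFVS (n : ℕ) : ℕ :=
  sSup {k : ℕ | ∃ r : Fin n → Fin n → Prop, IsTournament r ∧ fvsCount (Fin n) r = k}


/-- The tournament `pq(T')`: add vertices `p = inr false` and `q = inr true`
to `T'` with arcs `q → p`, `p → t` and `t → q` for every vertex `t` of `T'`. -/
def pqRel {V : Type*} (r : V → V → Prop) : V ⊕ Bool → V ⊕ Bool → Prop
  | Sum.inl t, Sum.inl t' => r t t'
  | Sum.inr true, Sum.inr false => True
  | Sum.inr false, Sum.inl _ => True
  | Sum.inl _, Sum.inr true => True
  | _, _ => False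

/-!
Split a vertex set of `pq(T')` into its trace `A` on `T'` and its trace `B` on `{p, q}`.
The only arc leaving `q` goes to `p` and the only arc entering `p` comes from `q`, so every
cycle of `pq(T')` lies in `T'` or is a triangle `p → t → q → p`. Hence `(A, B)` is a feedback
vertex set iff `A` is one of `T'` and `A` is everything when `B = ∅`. The minimal such pairs are
`(V(T'), ∅)` and `(A, {p})`, `(A, {q})` for `A` a minimal feedback vertex set of `T'`; the latter
is never all of `V(T')` because a single vertex is acyclic. This gives `2 f(T') + 1`.
-/

open Set Relation

section Acyclic

variable {α β : Type*} {r : α → α → Prop} {s : β → β → Prop}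

theorem AcyclicOn.mono {A B : Set α} (h : AcyclicOn r B) (hAB : A ⊆ B) : AcyclicOn r A :=
  fun v hv => h v (TransGen.mono (fun _ _ hab => ⟨hAB hab.1, hAB hab.2.1, hab.2.2⟩) _ _ hv)

theorem AcyclicOn.preimage {W : Set β} (h : AcyclicOn s W) (f : α → β)
    (hf : ∀ a b, r a b → s (f a) (f b)) : AcyclicOn r (f ⁻¹' W) :=
  fun v hv => h (f v) (hv.lift f fun _ _ hab => ⟨hab.1, hab.2.1, hf _ _ hab.2.2⟩)

theorem AcyclicOn.image {A : Set α} (h : AcyclicOn r A) {f : α → β} (hf : f.Injective)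
    (hfr : ∀ a b, s (f a) (f b) → r a b) : AcyclicOn s (f '' A) := by
  have lift : ∀ {x y}, TransGen (fun a b => a ∈ f '' A ∧ b ∈ f '' A ∧ s a b) x y →
      ∃ a b, f a = x ∧ f b = y ∧ TransGen (fun a b => a ∈ A ∧ b ∈ A ∧ r a b) a b := by
    intro x y hxy
    induction hxy with
    | single hxy =>
      obtain ⟨⟨a, ha, rfl⟩, ⟨b, hb, rfl⟩, hab⟩ := hxy
      exact ⟨a, b, rfl, rfl, .single ⟨ha, hb, hfr a b hab⟩⟩
    | tail _ hyz ih =>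
      obtain ⟨a, b, rfl, rfl, hab⟩ := ih
      obtain ⟨hb, ⟨c, hc, rfl⟩, hbc⟩ := hyz
      exact ⟨a, c, rfl, rfl, hab.tail ⟨hf.mem_set_image.1 hb, hc, hfr b c hbc⟩⟩
  intro v hv
  obtain ⟨a, b, rfl, hba, hab⟩ := lift hv
  exact h a (hf hba ▸ hab)

theorem acyclicOn_singleton {v : α} (hv : ¬ r v v) : AcyclicOn r {v} := by
  intro x hx
  obtain ⟨c, ⟨rfl, rfl, hxc⟩, -⟩ := TransGen.head'_iff.1 hx
  exact hv hxc

/-- With no arc from `B` back to `A`, a path that ends in `A` never visited `B` and a path that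
starts in `B` never leaves it, so every cycle lies in `A` or in `B`. -/
theorem AcyclicOn.union {A B : Set α} (hA : AcyclicOn r A) (hB : AcyclicOn r B)
    (hBA : ∀ b ∈ B, ∀ a ∈ A, ¬ r b a) : AcyclicOn r (A ∪ B) := by
  have into_A : ∀ {x y}, TransGen (fun a b => a ∈ A ∪ B ∧ b ∈ A ∪ B ∧ r a b) x y → y ∈ A →
      TransGen (fun a b => a ∈ A ∧ b ∈ A ∧ r a b) x y := by
    intro x y hxy
    induction hxy with
    | single hxy =>
      intro hy
      have hx : x ∈ A := hxy.1.resolve_right fun hx => hBA x hx _ hy hxy.2.2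
      exact .single ⟨hx, hy, hxy.2.2⟩
    | tail _ hyz ih =>
      intro hz
      have hy := hyz.1.resolve_right fun hy => hBA _ hy _ hz hyz.2.2
      exact (ih hy).tail ⟨hy, hz, hyz.2.2⟩
  have from_B : ∀ {x y}, TransGen (fun a b => a ∈ A ∪ B ∧ b ∈ A ∪ B ∧ r a b) x y → x ∈ B →
      TransGen (fun a b => a ∈ B ∧ b ∈ B ∧ r a b) x y := by
    intro x y hxy
    induction hxy using TransGen.head_induction_on with
    | single hxy =>
      intro hx
      have hy := hxy.2.1.resolve_left fun hy => hBA _ hx _ hy hxy.2.2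
      exact .single ⟨hx, hy, hxy.2.2⟩
    | head hxy _ ih =>
      intro hx
      have hy := hxy.2.1.resolve_left fun hy => hBA _ hx _ hy hxy.2.2
      exact .head ⟨hx, hy, hxy.2.2⟩ (ih hy)
  intro v hv
  obtain ⟨c, ⟨hvAB, -⟩, -⟩ := TransGen.head'_iff.1 hv
  rcases hvAB with hvA | hvB
  · exact hA v (into_A hv hvA)
  · exact hB v (from_B hv hvB)

theorem isFVS_univ : IsFVS r univ := by
  intro v hv
  obtain ⟨c, ⟨hv, -⟩, -⟩ := TransGen.head'_iff.1 hv
  exact hv (mem_univ v)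

theorem isMinimalFVS_iff_minimal {F : Set α} : IsMinimalFVS r F ↔ Minimal (IsFVS r) F :=
  ⟨fun h => minimal_iff.2 ⟨h.1, fun _ hG hGF => (h.2 _ hGF hG).symm⟩,
    fun h => ⟨h.prop, fun _ hGF hG => h.eq_of_le hG hGF⟩⟩

theorem Minimal.ne_univ_of_isFVS [Nonempty α] (hirr : ∀ v, ¬ r v v) {F : Set α}
    (h : Minimal (IsFVS r) F) : F ≠ univ := by
  rintro rfl
  obtain ⟨v⟩ := ‹Nonempty α›
  have hv : IsFVS r {v}ᶜ := by
    rw [IsFVS, compl_compl]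
    exact acyclicOn_singleton (hirr v)
  exact (singleton_nonempty v).ne_empty (compl_univ_iff.1 (h.eq_of_le hv (subset_univ _)))

end Acyclic

section MinimalPairs

variable {α β : Type*} {Q : Set α → Prop}

theorem minimal_pair_iff (hQ : Q univ) {A : Set α} {B : Set β} :
    Minimal (fun x : Set α × Set β => Q x.1 ∧ (x.2 = ∅ → x.1 = univ)) (A, B) ↔
      A = univ ∧ B = ∅ ∨ Minimal Q A ∧ A ≠ univ ∧ ∃ b, B = {b} := by
  constructor
  · intro h
    obtain ⟨hA, hAB⟩ := h.prop
    rcases B.eq_empty_or_nonempty with rfl | ⟨b, hb⟩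
    · exact .inl ⟨hAB rfl, rfl⟩
    have hBb : ({b} : Set β) = B :=
      congrArg Prod.snd (h.eq_of_le (y := (A, {b})) ⟨hA, by simp⟩ ⟨le_rfl, by simpa⟩)
    refine .inr ⟨⟨hA, fun A' hA' hA'A => ?_⟩, fun hAu => ?_, b, hBb.symm⟩
    · exact (congrArg Prod.fst (h.eq_of_le (y := (A', {b})) ⟨hA', by simp⟩ ⟨hA'A, hBb.le⟩)).ge
    · have := h.eq_of_le (y := (univ, ∅)) ⟨hQ, fun _ => rfl⟩ ⟨hAu.ge, empty_subset B⟩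
      exact (nonempty_of_mem hb).ne_empty (congrArg Prod.snd this).symm
  · rintro (⟨rfl, rfl⟩ | ⟨hA, hAu, b, rfl⟩)
    · refine ⟨⟨hQ, fun _ => rfl⟩, fun ⟨A', B'⟩ ⟨_, hB'⟩ ⟨_, hB'B⟩ => ?_⟩
      obtain rfl : B' = ∅ := subset_empty_iff.1 hB'B
      exact ⟨(hB' rfl).ge, le_rfl⟩
    · refine ⟨⟨hA.prop, by simp⟩, fun ⟨A', B'⟩ ⟨hA', hB'⟩ ⟨hA'A, hB'b⟩ => ?_⟩
      rcases subset_singleton_iff_eq.1 hB'b with rfl | rfl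
      · exact absurd (univ_subset_iff.1 ((hB' rfl).ge.trans hA'A)) hAu
      · exact ⟨hA.le_of_le hA' hA'A, le_rfl⟩

theorem ncard_setOf_minimal_pair [Finite α] [Finite β] (hQ : Q univ) :
    {x : Set α × Set β | Minimal (fun x => Q x.1 ∧ (x.2 = ∅ → x.1 = univ)) x}.ncard
      = {A | Minimal Q A ∧ A ≠ univ}.ncard * Nat.card β + 1 := by
  have hset : {x : Set α × Set β | Minimal (fun x => Q x.1 ∧ (x.2 = ∅ → x.1 = univ)) x}
      = insert (univ, ∅) ({A | Minimal Q A ∧ A ≠ univ} ×ˢ range singleton) := by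
    ext ⟨A, B⟩
    simp only [mem_ofPred_eq, minimal_pair_iff hQ, mem_insert_iff, Prod.mk.injEq, mem_prod,
      mem_range, eq_comm (b := B), and_assoc]
  have hnot : ((univ, ∅) : Set α × Set β) ∉ {A | Minimal Q A ∧ A ≠ univ} ×ˢ range singleton :=
    fun h => h.1.2 rfl
  rw [hset, ncard_insert_of_notMem hnot, ncard_prod, ncard_range_of_injective singleton_injective]

end MinimalPairs

section PQ

open Sum

variable {V : Type*} {r : V → V → Prop}

theorem acyclicOn_pqRel_iff {W : Set (V ⊕ Bool)} :
    AcyclicOn (pqRel r) W ↔ AcyclicOn r (inl ⁻¹' W) ∧ (inr ⁻¹' W = univ → inl ⁻¹' W = ∅) := by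
  constructor
  · refine fun h => ⟨h.preimage inl fun _ _ hab => hab, fun hpq => ?_⟩
    refine eq_empty_iff_forall_notMem.2 fun t ht => h (inr false) ?_
    have hp : inr false ∈ W := (eq_univ_iff_forall.1 hpq) false
    have hq : inr true ∈ W := (eq_univ_iff_forall.1 hpq) true
    exact .tail (.tail (.single ⟨hp, ht, trivial⟩) ⟨ht, hq, trivial⟩) ⟨hq, hp, trivial⟩
  · rintro ⟨hA, hpq⟩
    have hAimg : AcyclicOn (pqRel r) (inl '' (inl ⁻¹' W)) := hA.image inl_injective fun _ _ h => h
    have hp : AcyclicOn (pqRel r) {inr false} := acyclicOn_singleton id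
    have hq : AcyclicOn (pqRel r) {inr true} := acyclicOn_singleton id
    by_cases hqW : inr true ∈ W
    · by_cases hpW : inr false ∈ W
      · -- `W ⊆ {q, p}`
        have hinl : inl ⁻¹' W = ∅ := hpq (eq_univ_of_forall fun b => by cases b <;> assumption)
        refine (hq.union hp ?_).mono fun x hx => ?_
        · rintro _ rfl _ rfl
          exact id
        · rcases x with t | _ | _ <;> simp_all [← mem_preimage (f := inl)]
      · -- `q` is a sink
        refine (hAimg.union hq ?_).mono fun x hx => ?_
        · rintro _ rfl _ ⟨t, -, rfl⟩
          exact id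
        · rcases x with t | _ | _ <;> simp_all
    · -- `p` is a source
      refine (hp.union hAimg ?_).mono fun x hx => ?_
      · rintro _ ⟨t, -, rfl⟩ _ rfl
        exact id
      · rcases x with t | _ | _ <;> simp_all

theorem isFVS_pqRel_iff {F : Set (V ⊕ Bool)} :
    IsFVS (pqRel r) F ↔
      IsFVS r (sumEquiv F).1 ∧ ((sumEquiv F).2 = ∅ → (sumEquiv F).1 = univ) := by
  simp only [IsFVS, acyclicOn_pqRel_iff, sumEquiv_apply, preimage_compl, compl_univ_iff,
    compl_empty_iff]

theorem isStrong_pqRel [Nonempty V] : IsStrong (pqRel r) := by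
  obtain ⟨t⟩ := ‹Nonempty V›
  have to_q : ∀ x, ReflTransGen (pqRel r) x (inr true)
    | inl _ => .single trivial
    | inr true => .refl
    | inr false => .tail (.single (b := inl t) trivial) trivial
  have from_q : ∀ x, ReflTransGen (pqRel r) (inr true) x
    | inl _ => .tail (.single (b := inr false) trivial) trivial
    | inr true => .refl
    | inr false => .single trivial
  exact fun u v => (to_q u).trans (from_q v)

end PQ

theorem stmt11_general {V : Type*} [Fintype V] [Nonempty V] (r : V → V → Prop)
    (hT : IsTournament r) :
    IsStrong (pqRel r) ∧
    {F : Set (V ⊕ Bool) | IsMinimalFVS (pqRel r) F}.ncard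
      = 2 * {F : Set V | IsMinimalFVS r F}.ncard + 1 := by
  refine ⟨isStrong_pqRel, ?_⟩
  have hmin : {A | Minimal (IsFVS r) A ∧ A ≠ univ} = {A | IsMinimalFVS r A} := by
    ext A
    simp only [mem_ofPred_eq, isMinimalFVS_iff_minimal, and_iff_left_iff_imp]
    exact Minimal.ne_univ_of_isFVS hT.1
  have hpair : sumEquiv '' {F | IsMinimalFVS (pqRel r) F}
      = {x | Minimal (fun x : Set V × Set Bool => IsFVS r x.1 ∧ (x.2 = ∅ → x.1 = univ)) x} := by
    simp only [isMinimalFVS_iff_minimal, OrderIso.image_setOfPred_minimal, isFVS_pqRel_iff,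
      OrderIso.apply_symm_apply]
  rw [← ncard_image_of_injective _ sumEquiv.injective, hpair,
    ncard_setOf_minimal_pair isFVS_univ, hmin, Nat.card_eq_fintype_card, Fintype.card_bool,
    mul_comm]

/-- If `T'` is a strong tournament, then `pq(T')` is strong and has exactly
`2 f(T') + 1` minimal feedback vertex sets. -/
theorem stmt11 {V : Type*} [Fintype V] [Nonempty V] (r : V → V → Prop)
    (hT : IsTournament r) (hS : IsStrong r) :
    IsStrong (pqRel r) ∧
    {F : Set (V ⊕ Bool) | IsMinimalFVS (pqRel r) F}.ncard
      = 2 * {F : Set V | IsMinimalFVS r F}.ncard + 1 :=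
  stmt11_general r hT
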